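/- Under condition (H2), for any q,q' ∈ ℝ^d, any δ, δ' > 0 and any T > 0, liminf_{n→∞} inf_{z ∈ E : |z − nq| < δn} (1/n) log G(z, nB(q',δ')) ≥ liminf_{n→∞} inf_{z ∈ E : |z − nq| < δn} (1/n) log ℙ_z(Z(Tn) ∈ nB(q', δ'/2)), where B(q',δ') denotes the open ball of radius δ' centered at q'. -/

import Mathlib

open MeasureTheory Filter Set Metric
open scoped ENNReal Topology Pointwise

noncomputable section

namespace GreenLDP

/-- The state space `ℝ^d` with its Euclidean norm. -/
abbrev Sp (d : ℕ) := EuclideanSpace ℝ (Fin d)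

/-- Path space: trajectories indexed by (real) time. -/
abbrev Path (d : ℕ) := ℝ → Sp d

variable {d : ℕ}

/-- A path is right continuous with left limits at all nonnegative times. -/
def CadlagOn (φ : Path d) : Prop :=
  ∀ t : ℝ, 0 ≤ t → ContinuousWithinAt φ (Ici t) t ∧
    (0 < t → ∃ L : Sp d, Tendsto φ (𝓝[<] t) (𝓝 L))

/-- Basic setup: a time-homogeneous Markov process `Z` on an unbounded subset
`E ⊆ ℝ^d`, described through the family of its path-space laws `P z`
(the law of the process started at `z ∈ E`), whose sample paths are right
continuous with left limits. -/
structure MarkovSetup (d : ℕ) where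
  /-- the (unbounded) state space `E ⊆ ℝ^d` -/
  E : Set (Sp d)
  /-- `P z` is the law on path space of the process started at `z`;
  `P z S = ℙ_z(Z(·) ∈ S)` -/
  P : Sp d → Measure (Path d)
  prob : ∀ z, IsProbabilityMeasure (P z)
  unbounded : ¬ Bornology.IsBounded E
  start : ∀ z ∈ E, P z {ω | ω 0 = z} = 1
  stays : ∀ z ∈ E, ∀ᵐ ω ∂ P z, ∀ t : ℝ, 0 ≤ t → ω t ∈ E
  cadlag : ∀ z ∈ E, ∀ᵐ ω ∂ P z, CadlagOn ω
  /-- (time-homogeneous) Markov property: conditionally on the position at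
  time `s`, the law of the shifted path is that of the process restarted there. -/
  markov : ∀ z ∈ E, ∀ s : ℝ, 0 ≤ s → ∀ F : Path d → ℝ≥0∞, Measurable F →
    ∫⁻ ω, F (fun t => ω (s + t)) ∂ P z = ∫⁻ ω, ∫⁻ ω', F ω' ∂ P (ω s) ∂ P z

/-- Green's function `G(z,B) = ∫₀^∞ ℙ_z(Z(t) ∈ B) dt`. -/
def green (P : Sp d → Measure (Path d)) (z : Sp d) (B : Set (Sp d)) : ℝ≥0∞ :=
  ∫⁻ t in Ioi (0 : ℝ), P z {ω | ω t ∈ B}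

/-- First exit time `τ_R = inf {t ≥ 0 : |Z(t)| ≥ R}` from the open ball of
radius `R` (equal to `∞` if the process never exits). -/
def exitTime (ω : Path d) (R : ℝ) : ℝ≥0∞ :=
  ⨅ t ∈ {t : ℝ | 0 ≤ t ∧ R ≤ ‖ω t‖}, ENNReal.ofReal t

/-- Truncated Green's function `G_R(z,B) = ∫₀^∞ ℙ_z(Z(t) ∈ B, τ_R > t) dt`. -/
def greenTrunc (P : Sp d → Measure (Path d)) (R : ℝ) (z : Sp d) (B : Set (Sp d)) : ℝ≥0∞ :=
  ∫⁻ t in Ioi (0 : ℝ), P z {ω | ω t ∈ B ∧ ENNReal.ofReal t < exitTime ω R}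

/-- The scaled path `Z^ε(t) = ε Z(t/ε)`. -/
def scaledPath (ε : ℝ) (ω : Path d) : Path d := fun t => ε • ω (t / ε)

/-- The set `{z ∈ E : |εz − q| < δ}` of admissible starting points. -/
def nearScaled (E : Set (Sp d)) (ε : ℝ) (q : Sp d) (δ : ℝ) : Set (Sp d) :=
  {z ∈ E | ‖ε • z - q‖ < δ}

/-- The set `{z ∈ E : |z − nq| < δn}` of admissible starting points. -/
def nearE (E : Set (Sp d)) (q : Sp d) (n δ : ℝ) : Set (Sp d) :=
  {z ∈ E | ‖z - n • q‖ < δ * n}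

/-- Large deviation lower bound for the scaled variables `Z^ε(T) = εZ(T/ε)` over
open sets:  `lim_{δ→0} liminf_{ε→0} ε log inf_{z∈E,|εz−q|<δ} ℙ_z(Z^ε(T) ∈ O)
≥ −inf_{q'∈O} I(q,q')`.  (Since the inner quantity is monotone in `δ`, the limit
as `δ → 0⁺` is the supremum over `δ > 0`.) -/
def LDPLower (E : Set (Sp d)) (P : Sp d → Measure (Path d)) (T : ℝ)
    (I : Sp d → Sp d → EReal) : Prop :=
  ∀ (q : Sp d) (O : Set (Sp d)), IsOpen O →
    -(⨅ q' ∈ O, I q q') ≤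
      ⨆ δ : {δ : ℝ // 0 < δ},
        liminf (fun ε : ℝ =>
          (ε : EReal) * ENNReal.log
            (⨅ z ∈ nearScaled E ε q δ.1, P z {ω | scaledPath ε ω T ∈ O}))
          (𝓝[>] (0 : ℝ))

/-- Large deviation upper bound for the scaled variables `Z^ε(T) = εZ(T/ε)` over
compact sets:  `lim_{δ→0} limsup_{ε→0} ε log sup_{z∈E,|εz−q|<δ} ℙ_z(Z^ε(T) ∈ V)
≤ −inf_{q'∈V} I(q,q')`. -/
def LDPUpperCompact (E : Set (Sp d)) (P : Sp d → Measure (Path d)) (T : ℝ)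
    (I : Sp d → Sp d → EReal) : Prop :=
  ∀ (q : Sp d) (V : Set (Sp d)), IsCompact V →
    (⨅ δ : {δ : ℝ // 0 < δ},
      limsup (fun ε : ℝ =>
        (ε : EReal) * ENNReal.log
          (⨆ z ∈ nearScaled E ε q δ.1, P z {ω | scaledPath ε ω T ∈ V}))
        (𝓝[>] (0 : ℝ)))
      ≤ -(⨅ q' ∈ V, I q q')

/-- Large deviation upper bound over closed sets (for the full LDP). -/
def LDPUpperClosed (E : Set (Sp d)) (P : Sp d → Measure (Path d)) (T : ℝ)
    (I : Sp d → Sp d → EReal) : Prop :=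
  ∀ (q : Sp d) (V : Set (Sp d)), IsClosed V →
    (⨅ δ : {δ : ℝ // 0 < δ},
      limsup (fun ε : ℝ =>
        (ε : EReal) * ENNReal.log
          (⨆ z ∈ nearScaled E ε q δ.1, P z {ω | scaledPath ε ω T ∈ V}))
        (𝓝[>] (0 : ℝ)))
      ≤ -(⨅ q' ∈ V, I q q')

/-- The weak large deviation principle in `ℝ^d` for `Z^ε(T)` with a lower
semicontinuous rate function `I_T : ℝ^d × ℝ^d → [0,∞)`. -/
def WeakLDP (E : Set (Sp d)) (P : Sp d → Measure (Path d)) (T : ℝ)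
    (I : Sp d → Sp d → ℝ) : Prop :=
  LowerSemicontinuous (fun p : Sp d × Sp d => I p.1 p.2) ∧
  (∀ q q' : Sp d, 0 ≤ I q q') ∧
  LDPLower E P T (fun q q' => ((I q q' : ℝ) : EReal)) ∧
  LDPUpperCompact E P T (fun q q' => ((I q q' : ℝ) : EReal))

/-- Hypothesis (H1): for every `T > 0` the scaled variables `Z^ε(T)` satisfy the
weak large deviation principle with rate function `I_T`. -/
def H1 (E : Set (Sp d)) (P : Sp d → Measure (Path d))
    (I : ℝ → Sp d → Sp d → ℝ) : Prop :=
  ∀ T : ℝ, 0 < T → WeakLDP E P T (I T)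

/-- The jump generating function
`φ̂(a) = sup_{z∈E} sup_{t∈[0,1]} 𝔼_z exp(a·(Z(t)−z))` of hypothesis (H2). -/
def mgf (E : Set (Sp d)) (P : Sp d → Measure (Path d)) (a : Sp d) : ℝ≥0∞ :=
  ⨆ z ∈ E, ⨆ t ∈ Icc (0:ℝ) 1,
    ∫⁻ ω, ENNReal.ofReal (Real.exp ((inner ℝ a (ω t - z) : ℝ))) ∂ P z

/-- Hypothesis (H2): `φ̂(a) < ∞` for every `a ∈ ℝ^d`. -/
def H2 (E : Set (Sp d)) (P : Sp d → Measure (Path d)) : Prop :=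
  ∀ a : Sp d, mgf E P a < ⊤

/-- Hypothesis (H3), communication condition with constant `θ > 0` : there is a
positive function `σ` on `E` with `σ(z)/|z| → 0` as `|z| → ∞` such that for all
`z, z' ∈ E` the probability, starting from `z`, of ever hitting the open ball
`B(z', σ(z'))` is at least `exp(−θ|z'−z|)`. -/
def H3 (E : Set (Sp d)) (P : Sp d → Measure (Path d)) (θ : ℝ) : Prop :=
  0 < θ ∧ ∃ σ : Sp d → ℝ, (∀ z ∈ E, 0 < σ z) ∧
    (∀ η : ℝ, 0 < η → ∃ M : ℝ, ∀ z ∈ E, M ≤ ‖z‖ → σ z < η * ‖z‖) ∧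
    ∀ z ∈ E, ∀ z' ∈ E,
      ENNReal.ofReal (Real.exp (-θ * ‖z' - z‖)) ≤
        P z {ω | ∃ t : ℝ, 0 ≤ t ∧ ω t ∈ ball z' (σ z')}

/-- The set `𝓡` of all possible limits `lim_{ε→0} ε z_ε` with `z_ε ∈ E`. -/
def RSet (E : Set (Sp d)) : Set (Sp d) :=
  {q | ∃ zf : ℝ → Sp d, (∀ ε : ℝ, zf ε ∈ E) ∧
    Tendsto (fun ε : ℝ => ε • zf ε) (𝓝[>] (0:ℝ)) (𝓝 q)}

/-- The quasipotential `I(q,q') = inf_{T>0} I_T(q,q')`. -/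
def quasipot (I : ℝ → Sp d → Sp d → ℝ) (q q' : Sp d) : ℝ :=
  ⨅ T : {T : ℝ // 0 < T}, I T.1 q q'

-- `Î(q,q') = I(q,q')` for `q ≠ q'` and `Î(q,q) = 0`.
open Classical in
def quasipotHat (I : ℝ → Sp d → Sp d → ℝ) (q q' : Sp d) : ℝ :=
  if q = q' then 0 else quasipot I q q'

/-- The Skorohod distance on `D([0,T],ℝ^d)` :
`d(φ,ψ) = inf_λ max(sup_{t∈[0,T]}|λ(t)−t|, sup_{t∈[0,T]}|φ(λ(t))−ψ(t)|)`,
the infimum being over increasing bijections `λ` of `[0,T]`. -/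
def skorohodDist (T : ℝ) (φ ψ : Path d) : ℝ :=
  sInf {r : ℝ | 0 ≤ r ∧ ∃ lam : ℝ → ℝ, StrictMonoOn lam (Icc 0 T) ∧
    lam '' Icc 0 T = Icc 0 T ∧
    ∀ t ∈ Icc 0 T, |lam t - t| ≤ r ∧ ‖φ (lam t) - ψ t‖ ≤ r}

/-- The Skorohod topology on paths over the time interval `[0,T]`, generated by
the balls of the Skorohod distance. -/
def skorohodTop (d : ℕ) (T : ℝ) : TopologicalSpace (Path d) :=
  TopologicalSpace.generateFrom
    {s | ∃ (φ : Path d) (r : ℝ), 0 < r ∧ s = {ψ | skorohodDist T φ ψ < r}}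

/-- A good rate function on `D([0,T],ℝ^d)` : for every `c ≥ 0` and every compact
`V ⊆ ℝ^d` the set `{φ : φ(0) ∈ V, I_{[0,T]}(φ) ≤ c}` is compact for the
Skorohod topology. -/
def GoodRate (T : ℝ) (J : Path d → ℝ≥0∞) : Prop :=
  ∀ c : ℝ, 0 ≤ c → ∀ V : Set (Sp d), IsCompact V →
    @IsCompact _ (skorohodTop d T) {φ : Path d | φ 0 ∈ V ∧ J φ ≤ ENNReal.ofReal c}

/-- Sample path large deviation lower bound on `D([0,T],ℝ^d)`. -/
def SPLDLower (E : Set (Sp d)) (P : Sp d → Measure (Path d)) (T : ℝ)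
    (J : Path d → ℝ≥0∞) : Prop :=
  ∀ (z : Sp d) (𝓞 : Set (Path d)), @IsOpen _ (skorohodTop d T) 𝓞 →
    -(⨅ φ ∈ {φ ∈ 𝓞 | φ 0 = z}, (J φ : EReal)) ≤
      ⨆ δ : {δ : ℝ // 0 < δ},
        liminf (fun ε : ℝ =>
          (ε : EReal) * ENNReal.log
            (⨅ z' ∈ nearScaled E ε z δ.1, P z' {ω | scaledPath ε ω ∈ 𝓞}))
          (𝓝[>] (0 : ℝ))

/-- Sample path large deviation upper bound on `D([0,T],ℝ^d)`. -/
def SPLDUpper (E : Set (Sp d)) (P : Sp d → Measure (Path d)) (T : ℝ)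
    (J : Path d → ℝ≥0∞) : Prop :=
  ∀ (z : Sp d) (F : Set (Path d)), @IsClosed _ (skorohodTop d T) F →
    (⨅ δ : {δ : ℝ // 0 < δ},
      limsup (fun ε : ℝ =>
        (ε : EReal) * ENNReal.log
          (⨆ z' ∈ nearScaled E ε z δ.1, P z' {ω | scaledPath ε ω ∈ F}))
        (𝓝[>] (0 : ℝ)))
      ≤ -(⨅ φ ∈ {φ ∈ F | φ 0 = z}, (J φ : EReal))

/-- The sample path large deviation principle on `D([0,T],ℝ^d)` with a good rate
function `J = I_{[0,T]}`. -/
def SPLD (E : Set (Sp d)) (P : Sp d → Measure (Path d)) (T : ℝ)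
    (J : Path d → ℝ≥0∞) : Prop :=
  GoodRate T J ∧ SPLDLower E P T J ∧ SPLDUpper E P T J

/-- Hypothesis (H1'): for every `T > 0` the scaled processes satisfy the sample
path large deviation principle with good rate function `I_{[0,T]} = Ipath T`,
and `I_T(q,q')` is the infimum of `I_{[0,T]}(φ)` over paths with `φ(0) = q`,
`φ(T) = q'`. -/
def H1' (E : Set (Sp d)) (P : Sp d → Measure (Path d))
    (Ipath : ℝ → Path d → ℝ≥0∞) (I : ℝ → Sp d → Sp d → ℝ) : Prop :=
  ∀ T : ℝ, 0 < T → SPLD E P T (Ipath T) ∧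
    ∀ q q' : Sp d,
      (ENNReal.ofReal (I T q q') : ℝ≥0∞) =
        ⨅ φ ∈ {φ : Path d | φ 0 = q ∧ φ T = q'}, Ipath T φ

/-- `lim_{δ→0} liminf_{n→∞} (1/n) log inf_{z∈E,|z−nq|<δn} G(z, nB)`
(the limit in `δ` being a supremum, by monotonicity). -/
def greenLiminf (E : Set (Sp d)) (P : Sp d → Measure (Path d))
    (q : Sp d) (B : Set (Sp d)) : EReal :=
  ⨆ δ : {δ : ℝ // 0 < δ},
    liminf (fun n : ℕ =>
      ((((n : ℝ)⁻¹ : ℝ)) : EReal) * ENNReal.log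
        (⨅ z ∈ nearE E q n δ.1, green P z ((n : ℝ) • B))) atTop

/-- `lim_{δ→0} limsup_{n→∞} (1/n) log sup_{z∈E,|z−nq|<δn} G(z, nB)`
(the limit in `δ` being an infimum, by monotonicity). -/
def greenLimsup (E : Set (Sp d)) (P : Sp d → Measure (Path d))
    (q : Sp d) (B : Set (Sp d)) : EReal :=
  ⨅ δ : {δ : ℝ // 0 < δ},
    limsup (fun n : ℕ =>
      ((((n : ℝ)⁻¹ : ℝ)) : EReal) * ENNReal.log
        (⨆ z ∈ nearE E q n δ.1, green P z ((n : ℝ) • B))) atTop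

/-!
A path that is in `nB(q', δ'/2)` at time `Tn` is still in `nB(q', δ')` at a time
`t ∈ (Tn, Tn + 1]` unless it has moved by `nδ'/2` in time `t - Tn ≤ 1`. By the Markov property
and the exponential Chebyshev inequality, (H2) makes this probability at most `1/2` for large `n`,
uniformly in the position at time `Tn`. Integrating over `t ∈ (Tn, Tn + 1]` gives
`ℙ_z(Z(Tn) ∈ nB(q', δ'/2)) ≤ 2 G(z, nB(q', δ'))`, and the factor `2` does not change the exponential
growth rate.
-/

theorem norm_le_sum_abs {ι : Type*} [Fintype ι] (x : EuclideanSpace ℝ ι) :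
    ‖x‖ ≤ ∑ i, |x i| := by
  calc ‖x‖ = ‖∑ i, x i • EuclideanSpace.basisFun ι ℝ i‖ := by
        conv_lhs => rw [← (EuclideanSpace.basisFun ι ℝ).toBasis.sum_repr x]
        simp
    _ ≤ ∑ i, ‖x i • EuclideanSpace.basisFun ι ℝ i‖ := norm_sum_le _ _
    _ = ∑ i, |x i| := by simp [norm_smul]

-- Dividing by `card ι + 1` instead of `card ι` keeps the statement uniform in `ι = ∅`.
theorem exists_le_abs_apply_of_le_norm {ι : Type*} [Fintype ι] {x : EuclideanSpace ℝ ι}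
    {r : ℝ} (hr : 0 < r) (hx : r ≤ ‖x‖) : ∃ i, r / (Fintype.card ι + 1) ≤ |x i| := by
  by_contra! hsmall
  have hcard : (Fintype.card ι : ℝ) * (r / (Fintype.card ι + 1)) < r := by
    rw [mul_div_assoc', div_lt_iff₀ (by positivity)]
    nlinarith
  have := calc r ≤ ∑ i, |x i| := hx.trans (norm_le_sum_abs x)
    _ ≤ ∑ _i : ι, r / (Fintype.card ι + 1) := Finset.sum_le_sum fun i _ => (hsmall i).le
    _ = Fintype.card ι * (r / (Fintype.card ι + 1)) := by simp
  linarith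

theorem measure_le_lintegral_exp_mul_exp_neg {Ω : Type*} [MeasurableSpace Ω] (μ : Measure Ω)
    {f : Ω → ℝ} (hf : Measurable f) (c : ℝ) :
    μ {ω | c ≤ f ω} ≤
      (∫⁻ ω, ENNReal.ofReal (Real.exp (f ω)) ∂μ) * ENNReal.ofReal (Real.exp (-c)) := by
  have hexp_pos : ENNReal.ofReal (Real.exp c) ≠ 0 := by simpa using Real.exp_pos c
  have hmarkov := mul_meas_ge_le_lintegral₀
    (ENNReal.measurable_ofReal.comp (Real.measurable_exp.comp hf)).aemeasurable
    (ENNReal.ofReal (Real.exp c)) (μ := μ)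
  simp only [Function.comp_apply, ENNReal.ofReal_le_ofReal_iff (Real.exp_pos _).le,
    Real.exp_le_exp] at hmarkov
  rw [Real.exp_neg, ENNReal.ofReal_inv_of_pos (Real.exp_pos c), ← div_eq_mul_inv,
    ENNReal.le_div_iff_mul_le (.inl hexp_pos) (.inl ENNReal.ofReal_ne_top), mul_comm]
  exact hmarkov

theorem liminf_inv_mul_log_eq_expGrowthInf (u : ℕ → ℝ≥0∞) :
    liminf (fun n : ℕ => ((((n : ℝ)⁻¹ : ℝ)) : EReal) * ENNReal.log (u n)) atTop =
      ExpGrowth.expGrowthInf u := by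
  simp only [ExpGrowth.expGrowthInf, div_eq_mul_inv, EReal.coe_inv, mul_comm]
  rfl

variable {E : Set (Sp d)} {P : Sp d → Measure (Path d)}

theorem lintegral_exp_inner_le_mgf {w : Sp d} (hw : w ∈ E) {s : ℝ} (hs : s ∈ Icc (0 : ℝ) 1)
    (a : Sp d) :
    ∫⁻ ω, ENNReal.ofReal (Real.exp (inner ℝ a (ω s - w))) ∂P w ≤ mgf E P a :=
  le_iSup₂_of_le (f := fun z _ => ⨆ t ∈ Icc (0 : ℝ) 1,
    ∫⁻ ω, ENNReal.ofReal (Real.exp (inner ℝ a (ω t - z))) ∂P z) w hw (le_iSup₂_of_le s hs le_rfl)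

def coordMgfSum (E : Set (Sp d)) (P : Sp d → Measure (Path d)) : ℝ≥0∞ :=
  ∑ i : Fin d, (mgf E P (EuclideanSpace.single i 1) + mgf E P (EuclideanSpace.single i (-1)))

theorem measure_le_norm_sub_le_mul_exp {w : Sp d} (hw : w ∈ E) {s : ℝ} (hs : s ∈ Icc (0 : ℝ) 1)
    {r : ℝ} (hr : 0 < r) :
    P w {ω | r ≤ ‖ω s - w‖} ≤ coordMgfSum E P * ENNReal.ofReal (Real.exp (-(r / (d + 1)))) := by
  set ρ := r / (d + 1)
  let tail (a : Sp d) : Set (Path d) := {ω | ρ ≤ inner ℝ a (ω s - w)}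
  have hcover : {ω | r ≤ ‖ω s - w‖} ⊆
      ⋃ i : Fin d, tail (EuclideanSpace.single i 1) ∪ tail (EuclideanSpace.single i (-1)) := by
    intro ω hω
    obtain ⟨i, hi⟩ := exists_le_abs_apply_of_le_norm hr hω
    rw [Fintype.card_fin] at hi
    refine mem_iUnion.2 ⟨i, ?_⟩
    rcases le_abs.1 hi with h | h
    · left; simpa [tail, ρ, EuclideanSpace.inner_single_left] using h
    · right; simpa [tail, ρ, EuclideanSpace.inner_single_left] using h
  have htail (a : Sp d) : P w (tail a) ≤ mgf E P a * ENNReal.ofReal (Real.exp (-ρ)) :=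
    (measure_le_lintegral_exp_mul_exp_neg _ (by fun_prop) ρ).trans
      (mul_le_mul_left (lintegral_exp_inner_le_mgf hw hs a) _)
  calc P w {ω | r ≤ ‖ω s - w‖}
      ≤ ∑ i : Fin d, P w (tail (EuclideanSpace.single i 1) ∪
          tail (EuclideanSpace.single i (-1))) :=
        (measure_mono hcover).trans (measure_iUnion_fintype_le _ _)
    _ ≤ ∑ i : Fin d, (mgf E P (EuclideanSpace.single i 1) +
          mgf E P (EuclideanSpace.single i (-1))) * ENNReal.ofReal (Real.exp (-ρ)) := by
        refine Finset.sum_le_sum fun i _ => (measure_union_le _ _).trans ?_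
        rw [add_mul]
        exact add_le_add (htail _) (htail _)
    _ = coordMgfSum E P * ENNReal.ofReal (Real.exp (-ρ)) := by
        rw [coordMgfSum, Finset.sum_mul]

theorem H2.tendsto_iSup_measure_le_norm_sub (hH2 : H2 E P) :
    Tendsto (fun r : ℝ => ⨆ w ∈ E, ⨆ s ∈ Icc (0 : ℝ) 1, P w {ω | r ≤ ‖ω s - w‖})
      atTop (𝓝 0) := by
  have hC : coordMgfSum E P ≠ ⊤ :=
    (ENNReal.sum_lt_top.2 fun i _ => ENNReal.add_lt_top.2 ⟨hH2 _, hH2 _⟩).ne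
  have hexp : Tendsto (fun r : ℝ => ENNReal.ofReal (Real.exp (-(r / (d + 1))))) atTop (𝓝 0) := by
    rw [← ENNReal.ofReal_zero]
    refine ENNReal.tendsto_ofReal (Real.tendsto_exp_atBot.comp ?_)
    exact tendsto_neg_atTop_atBot.comp (tendsto_id.atTop_div_const (by positivity))
  refine tendsto_of_tendsto_of_tendsto_of_le_of_le' tendsto_const_nhds
    (by simpa using ENNReal.Tendsto.const_mul hexp (.inr hC)) (.of_forall fun _ => zero_le) ?_
  filter_upwards [eventually_gt_atTop 0] with r hr
  exact iSup₂_le fun w hw => iSup₂_le fun s hs => measure_le_norm_sub_le_mul_exp hw hs hr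

namespace MarkovSetup

variable (M : MarkovSetup d)

theorem ae_start {z : Sp d} (hz : z ∈ M.E) : ∀ᵐ ω ∂M.P z, ω 0 = z := by
  have := M.prob z
  refine (ae_iff_measure_eq ?_).2 ?_
  · exact (measurableSet_eq_fun (measurable_pi_apply (0 : ℝ)) measurable_const).nullMeasurableSet
  · rw [measure_univ]
    exact M.start z hz

theorem measure_apply_mem_and_increment_mem_le {z : Sp d} (hz : z ∈ M.E) {s₀ : ℝ}
    (hs₀ : 0 ≤ s₀) (s : ℝ) {B A : Set (Sp d)} (hB : MeasurableSet B) (hA : MeasurableSet A)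
    {b : ℝ≥0∞} (hbound : ∀ w ∈ M.E, M.P w {ω | ω s - w ∈ A} ≤ b) :
    M.P z {ω | ω s₀ ∈ B ∧ ω (s₀ + s) - ω s₀ ∈ A} ≤ b * M.P z {ω | ω s₀ ∈ B} := by
  set S : Set (Path d) := {ω | ω 0 ∈ B ∧ ω s - ω 0 ∈ A}
  have hS : MeasurableSet S :=
    (measurable_pi_apply 0 hB).inter (((measurable_pi_apply s).sub (measurable_pi_apply 0)) hA)
  have hrestart : ∀ᵐ ω ∂M.P z, M.P (ω s₀) S ≤ b * B.indicator 1 (ω s₀) := by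
    filter_upwards [M.stays z hz] with ω hω
    have hw := hω s₀ hs₀
    have hS_ae : S =ᵐ[M.P (ω s₀)] {ω' | ω s₀ ∈ B ∧ ω' s - ω s₀ ∈ A} := by
      filter_upwards [M.ae_start hw] with ω' h0
      change (ω' 0 ∈ B ∧ ω' s - ω' 0 ∈ A) = (ω s₀ ∈ B ∧ ω' s - ω s₀ ∈ A)
      rw [h0]
    rw [measure_congr hS_ae]
    by_cases hwB : ω s₀ ∈ B
    · simpa [hwB] using hbound _ hw
    · simp [hwB]
  have hT : MeasurableSet {ω : Path d | ω s₀ ∈ B ∧ ω (s₀ + s) - ω s₀ ∈ A} :=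
    (measurable_pi_apply s₀ hB).inter
      (((measurable_pi_apply (s₀ + s)).sub (measurable_pi_apply s₀)) hA)
  have hBs : MeasurableSet {ω : Path d | ω s₀ ∈ B} := measurable_pi_apply s₀ hB
  have hshift : (fun ω : Path d => S.indicator 1 (fun t => ω (s₀ + t))) =
      {ω | ω s₀ ∈ B ∧ ω (s₀ + s) - ω s₀ ∈ A}.indicator (1 : Path d → ℝ≥0∞) := by
    ext ω
    classical
    simp only [S, Set.indicator_apply, Set.mem_ofPred_eq, add_zero, Pi.one_apply]
  have hpos : (fun ω : Path d => B.indicator 1 (ω s₀)) =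
      {ω | ω s₀ ∈ B}.indicator (1 : Path d → ℝ≥0∞) := rfl
  calc M.P z {ω | ω s₀ ∈ B ∧ ω (s₀ + s) - ω s₀ ∈ A}
      = ∫⁻ ω, S.indicator 1 (fun t => ω (s₀ + t)) ∂M.P z := by
        rw [hshift, lintegral_indicator_one hT]
    _ = ∫⁻ ω, M.P (ω s₀) S ∂M.P z := by
        rw [M.markov z hz s₀ hs₀ _ (measurable_one.indicator hS)]
        simp_rw [lintegral_indicator_one hS]
    _ ≤ ∫⁻ ω, b * B.indicator 1 (ω s₀) ∂M.P z := lintegral_mono_ae hrestart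
    _ = b * M.P z {ω | ω s₀ ∈ B} := by
        rw [lintegral_const_mul _ (hpos ▸ measurable_one.indicator hBs), hpos,
          lintegral_indicator_one hBs]

theorem measure_le_two_mul_green {z : Sp d} (hz : z ∈ M.E)
    {t₀ : ℝ} (ht₀ : 0 ≤ t₀) (x : Sp d) (r : ℝ) {r' : ℝ}
    (hsmall : ∀ w ∈ M.E, ∀ s ∈ Icc (0 : ℝ) 1, M.P w {ω | r' ≤ ‖ω s - w‖} ≤ 2⁻¹) :
    M.P z {ω | ω t₀ ∈ ball x r} ≤ 2 * green M.P z (ball x (r + r')) := by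
  have := M.prob z
  set p := M.P z {ω | ω t₀ ∈ ball x r}
  have hslice : ∀ t ∈ Ioc t₀ (t₀ + 1), 2⁻¹ * p ≤ M.P z {ω | ω t ∈ ball x (r + r')} := by
    intro t ht
    have hmove := M.measure_apply_mem_and_increment_mem_le hz ht₀ (t - t₀)
      (measurableSet_ball (x := x) (ε := r))
      (measurableSet_le measurable_const measurable_norm)
      fun w hw => hsmall w hw _ ⟨by linarith [ht.1], by linarith [ht.2]⟩
    rw [add_sub_cancel] at hmove
    have hsplit : p ≤ M.P z {ω | ω t ∈ ball x (r + r')} + 2⁻¹ * p := by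
      refine (measure_mono fun ω hω => ?_).trans ((measure_union_le _ _).trans
        (add_le_add le_rfl hmove))
      by_cases hfar : r' ≤ ‖ω t - ω t₀‖
      · exact .inr ⟨hω, hfar⟩
      · refine .inl (mem_ball.2 ?_)
        calc dist (ω t) x ≤ dist (ω t) (ω t₀) + dist (ω t₀) x := dist_triangle _ _ _
          _ < r' + r := add_lt_add (by rwa [dist_eq_norm, ← not_le]) hω
          _ = r + r' := add_comm _ _
    have hhalf_ne_top : 2⁻¹ * p ≠ ⊤ :=
      ENNReal.mul_ne_top (ENNReal.inv_ne_top.2 two_ne_zero) (measure_ne_top _ _)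
    refine (ENNReal.add_le_add_iff_right hhalf_ne_top).1 ?_
    rwa [← two_mul, ← mul_assoc, ENNReal.mul_inv_cancel two_ne_zero ENNReal.ofNat_ne_top,
      one_mul]
  calc p = 2 * ∫⁻ _t in Ioc t₀ (t₀ + 1), 2⁻¹ * p := by
        rw [setLIntegral_const, Real.volume_Ioc, add_sub_cancel_left, ENNReal.ofReal_one,
          mul_one, ← mul_assoc, ENNReal.mul_inv_cancel two_ne_zero ENNReal.ofNat_ne_top, one_mul]
    _ ≤ 2 * ∫⁻ t in Ioc t₀ (t₀ + 1), M.P z {ω | ω t ∈ ball x (r + r')} :=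
        mul_le_mul_right (setLIntegral_mono' measurableSet_Ioc hslice) 2
    _ ≤ 2 * green M.P z (ball x (r + r')) :=
        mul_le_mul_right (lintegral_mono_set fun t ht => ht₀.trans_lt ht.1) 2

end MarkovSetup

theorem green_lower_via_prob_general
    {d : ℕ} (M : MarkovSetup d)
    (hH2 : H2 M.E M.P) :
    ∀ q q' : Sp d, ∀ δ δ' T : ℝ, 0 < δ → 0 < δ' → 0 < T →
      liminf (fun n : ℕ =>
        ((((n : ℝ)⁻¹ : ℝ)) : EReal) * ENNReal.log
          (⨅ z ∈ nearE M.E q n δ,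
            M.P z {ω | ω (T * n) ∈ (n : ℝ) • ball q' (δ' / 2)})) atTop ≤
      liminf (fun n : ℕ =>
        ((((n : ℝ)⁻¹ : ℝ)) : EReal) * ENNReal.log
          (⨅ z ∈ nearE M.E q n δ, green M.P z ((n : ℝ) • ball q' δ'))) atTop := by
  intro q q' δ δ' T _ hδ' _
  have hsmall : ∀ᶠ n : ℕ in atTop, ∀ w ∈ M.E, ∀ s ∈ Icc (0 : ℝ) 1,
      M.P w {ω | (n : ℝ) * (δ' / 2) ≤ ‖ω s - w‖} ≤ 2⁻¹ := by
    have hr : Tendsto (fun n : ℕ => (n : ℝ) * (δ' / 2)) atTop atTop :=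
      tendsto_natCast_atTop_atTop.atTop_mul_const (by positivity)
    filter_upwards [(hH2.tendsto_iSup_measure_le_norm_sub.comp hr).eventually
      (gt_mem_nhds (by norm_num : (0 : ℝ≥0∞) < 2⁻¹))] with n hn w hw s hs
    refine le_trans ?_ hn.le
    exact le_iSup₂_of_le w hw (le_iSup₂_of_le s hs le_rfl)
  rw [liminf_inv_mul_log_eq_expGrowthInf, liminf_inv_mul_log_eq_expGrowthInf]
  refine ExpGrowth.expGrowthInf_le_of_eventually_le (b := 2) ENNReal.ofNat_ne_top ?_
  filter_upwards [hsmall, eventually_gt_atTop 0] with n hn hn0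
  have hn0 : (0 : ℝ) < n := Nat.cast_pos.2 hn0
  have hscale (ρ : ℝ) : (n : ℝ) • ball q' ρ = ball ((n : ℝ) • q') (n * ρ) := by
    rw [_root_.smul_ball hn0.ne', Real.norm_of_nonneg hn0.le]
  calc ⨅ z ∈ nearE M.E q n δ, M.P z {ω | ω (T * n) ∈ (n : ℝ) • ball q' (δ' / 2)}
      ≤ ⨅ z ∈ nearE M.E q n δ, 2 * green M.P z ((n : ℝ) • ball q' δ') := by
        refine iInf₂_mono fun z hz => ?_
        rw [hscale, hscale, show (n : ℝ) * δ' = n * (δ' / 2) + n * (δ' / 2) by ring]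
        exact M.measure_le_two_mul_green hz.1 (by positivity) _ _ hn
    _ = 2 * ⨅ z ∈ nearE M.E q n δ, green M.P z ((n : ℝ) • ball q' δ') := by
        simp only [ENNReal.mul_iInf_of_ne two_ne_zero ENNReal.ofNat_ne_top]

/-- Under (H2), for any `q, q' ∈ ℝ^d`, `δ, δ' > 0` and `T > 0`,
`liminf_{n→∞} inf_{z∈E,|z−nq|<δn} (1/n) log G(z, nB(q',δ')) ≥
liminf_{n→∞} inf_{z∈E,|z−nq|<δn} (1/n) log ℙ_z(Z(Tn) ∈ nB(q',δ'/2))`. -/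
theorem green_lower_via_prob
    {d : ℕ} (M : MarkovSetup d)
    (hGfin : ∀ z ∈ M.E, ∀ B : Set (Sp d), IsCompact B → green M.P z B < ⊤)
    (hH2 : H2 M.E M.P) :
    ∀ q q' : Sp d, ∀ δ δ' T : ℝ, 0 < δ → 0 < δ' → 0 < T →
      liminf (fun n : ℕ =>
        ((((n : ℝ)⁻¹ : ℝ)) : EReal) * ENNReal.log
          (⨅ z ∈ nearE M.E q n δ,
            M.P z {ω | ω (T * n) ∈ (n : ℝ) • ball q' (δ' / 2)})) atTop ≤
      liminf (fun n : ℕ =>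
        ((((n : ℝ)⁻¹ : ℝ)) : EReal) * ENNReal.log
          (⨅ z ∈ nearE M.E q n δ, green M.P z ((n : ℝ) • ball q' δ'))) atTop :=
  green_lower_via_prob_general M hH2

end GreenLDP
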